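/- Let attn(q, K, V) = softmax(qKᵀ)V be dot-product attention with query q ∈ ℝˡ, keys K ∈ ℝ^{n×l} (rows k_t), and values V ∈ ℝ^{n×k} (rows v_t). If the scores q·k_t have a unique maximizer t* and q, K, V are scaled by N, then as N → ∞ attention converges to the limit of v_{t*} (assuming v_{t*} converges). -/

import Mathlib

/-! Multiplying the scores by `N` and shifting them by the top score, every weight except the
top one is `exp (N * c)` with `c < 0`, hence vanishes, while the top one is `1 / (1 + o(1))`.
Attention is then a finite sum of products of convergent factors. -/

open Filter Real Topology Finset

noncomputable def softmax {n : ℕ} (u : Fin n → ℝ) (t : Fin n) : ℝ :=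
  Real.exp (u t) / ∑ s, Real.exp (u s)

lemma softmax_sub_const {n : ℕ} (u : Fin n → ℝ) (c : ℝ) :
    softmax (fun s => u s - c) = softmax u := by
  funext t
  simp only [softmax, Real.exp_sub, ← Finset.sum_div]
  exact div_div_div_cancel_right₀ (Real.exp_ne_zero c) _ _

lemma tendsto_exp_mul_atTop_of_neg {c : ℝ} (hc : c < 0) :
    Tendsto (fun N : ℝ => exp (N * c)) atTop (𝓝 0) :=
  tendsto_exp_atBot.comp (tendsto_id.atTop_mul_const_of_neg hc)

lemma tendsto_softmax_mul_atTop {n : ℕ} {u : Fin n → ℝ} {tstar : Fin n}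
    (hmax : ∀ s, s ≠ tstar → u s < u tstar) (t : Fin n) :
    Tendsto (fun N : ℝ => softmax (fun s => N * u s) t) atTop
      (𝓝 (if t = tstar then 1 else 0)) := by
  have hexp : ∀ s, Tendsto (fun N : ℝ => exp (N * (u s - u tstar))) atTop
      (𝓝 (if s = tstar then 1 else 0)) := by
    intro s
    by_cases hs : s = tstar
    · simp [hs]
    · simpa [hs] using tendsto_exp_mul_atTop_of_neg (sub_neg.2 (hmax s hs))
  have hden : Tendsto (fun N : ℝ => ∑ s, exp (N * (u s - u tstar))) atTop (𝓝 1) := by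
    simpa using tendsto_finsetSum univ fun s _ => hexp s
  have hshift : ∀ N : ℝ, softmax (fun s => N * (u s - u tstar)) = softmax (fun s => N * u s) :=
    fun N => by simpa only [mul_sub] using softmax_sub_const (fun s => N * u s) (N * u tstar)
  have hlim := (hexp t).div hden one_ne_zero
  rw [div_one] at hlim
  exact hlim.congr fun N => by rw [← hshift N]; rfl

/-- Dot-product attention with scores scaled by `N`, values possibly depending on `N`. -/
theorem attention_unique_max_tendsto {n l k : ℕ}
    (q : Fin l → ℝ) (K : Fin n → Fin l → ℝ)
    (v : ℝ → Fin n → Fin k → ℝ) (L : Fin n → Fin k → ℝ)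
    (hv : ∀ t i, Tendsto (fun N : ℝ => v N t i) atTop (nhds (L t i)))
    (tstar : Fin n)
    (hmax : ∀ s : Fin n, s ≠ tstar → (∑ i, q i * K s i) < ∑ i, q i * K tstar i)
    (i : Fin k) :
    Tendsto
      (fun N : ℝ => ∑ t, softmax (fun s => N * ∑ j, q j * K s j) t * v N t i)
      atTop (nhds (L tstar i)) := by
  have hsum := tendsto_finsetSum univ fun t _ =>
    (tendsto_softmax_mul_atTop hmax t).mul (hv t i)
  simpa using hsum
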